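/- For λ > 0, if R₁ and R₂ are independent exponential random variables with rate 2λ, and R is a random variable whose conditional CDF given R₁ = r₁, R₂ = r₂ is min(2r, r + min(r₁,r₂), r₁+r₂)/(r₁+r₂) (truncated at 1), then the unconditional CDF of R is F(r) = 1 - exp(-2λr) + 2λr·exp(-2λr) - 4λ²r²·E₁(2λr) for r > 0. -/

import Mathlib

open Real MeasureTheory

noncomputable def E1 (z : ℝ) : ℝ := ∫ t in Set.Ioi z, Real.exp (-t) / t

/-- Conditional CDF of the distance to a uniform point in the interval `(-r₁, r₂)`,
evaluated at `r`. -/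
noncomputable def condCDF1D (r r1 r2 : ℝ) : ℝ :=
  min (min (2 * r) (r + min r1 r2)) (r1 + r2) / (r1 + r2)

open Set

lemma measurable_expdiv : Measurable fun t : ℝ => Real.exp (-t) / t :=
  (Real.measurable_exp.comp measurable_neg).div measurable_id

lemma integrableOn_expdiv {z : ℝ} (hz : 0 < z) :
    IntegrableOn (fun t => Real.exp (-t) / t) (Set.Ioi z) := by
  have h := exp_neg_integrableOn_Ioi z (b := 1) one_pos
  refine ((h.const_mul (1/z)).mono' measurable_expdiv.aestronglyMeasurable.restrict ?_)
  filter_upwards [ae_restrict_mem measurableSet_Ioi] with t ht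
  have ht' : z < t := ht
  have h0 : (0:ℝ) < t := hz.trans ht'
  rw [norm_div, Real.norm_eq_abs, Real.norm_eq_abs, abs_of_pos h0,
    abs_of_pos (Real.exp_pos _), div_le_iff₀ h0, neg_one_mul]
  have : Real.exp (-t) * 1 ≤ Real.exp (-t) * (t/z) := by
    apply mul_le_mul_of_nonneg_left _ (Real.exp_pos _).le
    rw [le_div_iff₀ hz]; linarith
  calc Real.exp (-t) = Real.exp (-t) * 1 := by ring
  _ ≤ Real.exp (-t) * (t/z) := this
  _ = 1/z * Real.exp (-t) * t := by ring

lemma E1_nonneg {z : ℝ} (hz : 0 < z) : 0 ≤ E1 z := by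
  apply setIntegral_nonneg measurableSet_Ioi
  intro t ht
  exact div_nonneg (Real.exp_pos _).le (hz.trans ht).le

lemma E1_le {z : ℝ} (hz : 0 < z) : E1 z ≤ Real.exp (-z) / z := by
  have h1 : E1 z ≤ ∫ t in Set.Ioi z, Real.exp (-t) / z := by
    apply setIntegral_mono_on (integrableOn_expdiv hz)
      ((exp_neg_integrableOn_Ioi z one_pos).congr_fun (by intro x _; simp) measurableSet_Ioi
        |>.div_const z) measurableSet_Ioi
    intro t ht
    exact div_le_div_of_nonneg_left (Real.exp_pos _).le hz (le_of_lt ht)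
  calc E1 z ≤ ∫ t in Set.Ioi z, Real.exp (-t) / z := h1
  _ = (∫ t in Set.Ioi z, Real.exp (-t)) / z := by rw [integral_div]
  _ = Real.exp (-z) / z := by rw [integral_exp_neg_Ioi]

lemma E1_tendsto : Filter.Tendsto E1 Filter.atTop (nhds 0) := by
  have h1 : ∀ᶠ z in Filter.atTop, E1 z ≤ Real.exp (-z) := by
    filter_upwards [Filter.eventually_ge_atTop 1] with z hz
    calc E1 z ≤ Real.exp (-z) / z := E1_le (lt_of_lt_of_le one_pos hz)
    _ ≤ Real.exp (-z) / 1 := by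
        apply div_le_div_of_nonneg_left (Real.exp_pos _).le one_pos hz
    _ = Real.exp (-z) := by rw [div_one]
  have h2 : ∀ᶠ z in Filter.atTop, 0 ≤ E1 z := by
    filter_upwards [Filter.eventually_gt_atTop 0] with z hz using E1_nonneg hz
  have h3 : Filter.Tendsto (fun z : ℝ => Real.exp (-z)) Filter.atTop (nhds 0) := by
    simpa using Real.tendsto_exp_comp_nhds_zero.mpr Filter.tendsto_neg_atTop_atBot
  exact squeeze_zero' h2 h1 h3

lemma E1_sub {w z : ℝ} (hw : 0 < w) (hwz : w ≤ z) :
    E1 w = (∫ t in w..z, Real.exp (-t) / t) + E1 z := by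
  rw [intervalIntegral.integral_of_le hwz]
  unfold E1
  rw [← setIntegral_union _ measurableSet_Ioi
    ((integrableOn_expdiv hw).mono_set Set.Ioc_subset_Ioi_self)
    (integrableOn_expdiv (hw.trans_le hwz))]
  · rw [Set.Ioc_union_Ioi_eq_Ioi hwz]
  · rw [Set.disjoint_iff]
    rintro x ⟨hx1, hx2⟩
    exact absurd hx2.out (not_lt.mpr hx1.2)

lemma hasDerivAt_E1 {z : ℝ} (hz : 0 < z) :
    HasDerivAt E1 (-(Real.exp (-z) / z)) z := by
  set w := z/2 with hwdef
  have hw : 0 < w := by positivity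
  have hwz : w < z := by simp [hwdef]; linarith
  have hd : HasDerivAt (fun u => E1 w - ∫ t in w..u, Real.exp (-t) / t)
      (-(Real.exp (-z) / z)) z := by
    have : HasDerivAt (fun u => ∫ t in w..u, Real.exp (-t) / t) (Real.exp (-z) / z) z := by
      apply intervalIntegral.integral_hasDerivAt_right
      · exact (intervalIntegrable_iff_integrableOn_Ioc_of_le hwz.le).mpr
          ((integrableOn_expdiv hw).mono_set Set.Ioc_subset_Ioi_self)
      · exact measurable_expdiv.stronglyMeasurable.stronglyMeasurableAtFilter
      · exact ((Real.continuous_exp.comp continuous_neg).continuousAt).div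
          continuousAt_id hz.ne'
    exact ((hasDerivAt_const z (E1 w)).sub this).congr_deriv (by ring)
  apply hd.congr_of_eventuallyEq
  filter_upwards [Ioi_mem_nhds hwz] with u hu
  have := E1_sub hw (le_of_lt hu.out)
  linarith

lemma split_Ioi {f : ℝ → ℝ} {c d : ℝ} (hcd : c ≤ d) (h1 : IntegrableOn f (Ioi c)) :
    ∫ x in Ioi c, f x = (∫ x in Ioc c d, f x) + ∫ x in Ioi d, f x := by
  rw [← setIntegral_union _ measurableSet_Ioi (h1.mono_set Ioc_subset_Ioi_self)
    (h1.mono_set (Ioi_subset_Ioi hcd)), Ioc_union_Ioi_eq_Ioi hcd]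
  rw [Set.disjoint_iff]
  rintro x ⟨hx1, hx2⟩
  exact absurd hx2.out (not_lt.mpr hx1.2)

lemma comp_add_Ioi (f : ℝ → ℝ) (c d : ℝ) :
    ∫ x in Ioi c, f (x + d) = ∫ x in Ioi (c + d), f x := by
  rw [← integral_indicator measurableSet_Ioi, ← integral_indicator measurableSet_Ioi,
    ← integral_add_right_eq_self (Set.indicator (Ioi (c + d)) f) d]
  congr 1
  ext x
  simp [Set.indicator_apply, mem_Ioi, add_lt_add_iff_right]

lemma E1_scale {b c : ℝ} (hb : 0 < b) (hc : 0 < c) :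
    ∫ u in Ioi c, Real.exp (-(b * u)) / u = E1 (b * c) := by
  have h : EqOn (fun u => Real.exp (-(b * u)) / u)
      (fun u => b * ((fun t => Real.exp (-t) / t) (b * u))) (Ioi c) := by
    intro u hu
    have hu0 : 0 < u := hc.trans hu
    field_simp
  rw [setIntegral_congr_fun measurableSet_Ioi h, integral_const_mul,
    integral_comp_mul_left_Ioi (fun t => Real.exp (-t) / t) c hb]
  simp only [smul_eq_mul, ← mul_assoc, mul_inv_cancel₀ hb.ne', one_mul]
  rfl

lemma exp_Ioi {b c : ℝ} (hb : 0 < b) :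
    ∫ x in Ioi c, Real.exp (-(b * x)) = Real.exp (-(b * c)) / b := by
  have := integral_comp_mul_left_Ioi (fun t => Real.exp (-t)) c hb
  simp only [smul_eq_mul] at this
  rw [this, integral_exp_neg_Ioi, eq_div_iff hb.ne']
  rw [mul_comm, ← mul_assoc, mul_inv_cancel₀ hb.ne', one_mul]

lemma integrableOn_expmul {b c : ℝ} (hb : 0 < b) :
    IntegrableOn (fun x => Real.exp (-(b * x))) (Ioi c) := by
  have := exp_neg_integrableOn_Ioi c hb
  exact this.congr_fun (by intro x _; simp [neg_mul]) measurableSet_Ioi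

lemma exp_Ioc {b c d : ℝ} (hb : 0 < b) (hcd : c ≤ d) :
    ∫ x in Ioc c d, Real.exp (-(b * x)) = (Real.exp (-(b * c)) - Real.exp (-(b * d))) / b := by
  have h := split_Ioi (f := fun x => Real.exp (-(b * x))) hcd (integrableOn_expmul hb)
  rw [exp_Ioi hb, exp_Ioi hb] at h
  rw [sub_div]
  linarith [h]

lemma integrableOn_K {b s c : ℝ} (hb : 0 < b) (hsc : 0 < s + c) :
    IntegrableOn (fun x => Real.exp (-(b * x)) / (s + x)) (Ioi c) := by
  refine ((integrableOn_expmul (c := c) hb).const_mul (1 / (s + c))).mono'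
    ((Real.measurable_exp.comp ((measurable_const_mul b).neg)).div
      (measurable_const.add measurable_id)).aestronglyMeasurable.restrict ?_
  filter_upwards [ae_restrict_mem measurableSet_Ioi] with x hx
  have h0 : 0 < s + x := by have := hx.out; linarith
  rw [norm_div, Real.norm_eq_abs, Real.norm_eq_abs, abs_of_pos h0, abs_of_pos (Real.exp_pos _)]
  rw [div_le_iff₀ h0]
  have h1 : Real.exp (-(b * x)) * (s + c) ≤ Real.exp (-(b * x)) * (s + x) := by
    apply mul_le_mul_of_nonneg_left _ (Real.exp_pos _).le
    linarith [hx.out]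
  calc Real.exp (-(b * x)) = (Real.exp (-(b * x)) * (s + c)) / (s + c) := by
        field_simp
  _ ≤ (Real.exp (-(b * x)) * (s + x)) / (s + c) := by
        gcongr
  _ = 1 / (s + c) * Real.exp (-(b * x)) * (s + x) := by ring

lemma K_Ioi {b s c : ℝ} (hb : 0 < b) (hsc : 0 < s + c) :
    ∫ x in Ioi c, Real.exp (-(b * x)) / (s + x) = Real.exp (b * s) * E1 (b * (s + c)) := by
  have h : EqOn (fun x => Real.exp (-(b * x)) / (s + x))
      (fun x => Real.exp (b * s) * ((fun u => Real.exp (-(b * u)) / u) (x + s))) (Ioi c) := by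
    intro x hx
    simp only
    have e : Real.exp (b * s) * Real.exp (-(b * (x + s))) = Real.exp (-(b * x)) := by
      rw [← Real.exp_add]; congr 1; ring
    calc Real.exp (-(b * x)) / (s + x)
        = Real.exp (b * s) * Real.exp (-(b * (x + s))) / (x + s) := by rw [e, add_comm s x]
    _ = Real.exp (b * s) * (Real.exp (-(b * (x + s))) / (x + s)) := by ring
  rw [setIntegral_congr_fun measurableSet_Ioi h, integral_const_mul,
    comp_add_Ioi (fun u => Real.exp (-(b * u)) / u) c s,
    E1_scale hb (by linarith : (0:ℝ) < c + s), add_comm c s]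

lemma K_Ioc {b s c d : ℝ} (hb : 0 < b) (hsc : 0 < s + c) (hcd : c ≤ d) :
    ∫ x in Ioc c d, Real.exp (-(b * x)) / (s + x)
      = Real.exp (b * s) * (E1 (b * (s + c)) - E1 (b * (s + d))) := by
  have h := split_Ioi (f := fun x => Real.exp (-(b * x)) / (s + x)) hcd (integrableOn_K hb hsc)
  rw [K_Ioi hb hsc, K_Ioi hb (by linarith : (0:ℝ) < s + d)] at h
  linarith [h]

lemma cond_eq_one {r r1 r2 : ℝ} (h1 : 0 < r1) (h2 : 0 < r2) (hlt : r1 < r) (hle : r2 ≤ r) :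
    condCDF1D r r1 r2 = 1 := by
  unfold condCDF1D
  rw [min_eq_right (le_min (by linarith) (by
    rcases le_total r1 r2 with h | h
    · rw [min_eq_left h]; linarith
    · rw [min_eq_right h]; linarith))]
  exact div_self (by positivity)

lemma cond_eq_A {r r1 r2 : ℝ} (h1 : 0 < r1) (hlt : r1 < r) (h2 : r < r2) :
    condCDF1D r r1 r2 = (r + r1) / (r1 + r2) := by
  unfold condCDF1D
  rw [min_eq_left (by linarith : r1 ≤ r2), min_eq_right (by linarith : r + r1 ≤ 2 * r),
    min_eq_left (by linarith : r + r1 ≤ r1 + r2)]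

lemma cond_eq_B {r r1 r2 : ℝ} (hr : 0 < r) (h2 : 0 < r2) (hge : r ≤ r1) (hle : r2 ≤ r) :
    condCDF1D r r1 r2 = (r + r2) / (r1 + r2) := by
  unfold condCDF1D
  rw [min_eq_right (by linarith : r2 ≤ r1), min_eq_right (by linarith : r + r2 ≤ 2 * r),
    min_eq_left (by linarith : r + r2 ≤ r1 + r2)]

lemma cond_eq_C {r r1 r2 : ℝ} (hr : 0 < r) (hge : r ≤ r1) (h2 : r < r2) :
    condCDF1D r r1 r2 = 2 * r / (r1 + r2) := by
  unfold condCDF1D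
  rw [min_eq_left (by
      rcases le_total r1 r2 with h | h
      · rw [min_eq_left h]; linarith
      · rw [min_eq_right h]; linarith : 2 * r ≤ r + min r1 r2),
    min_eq_left (by linarith : 2 * r ≤ r1 + r2)]

lemma cond_nonneg {r r1 r2 : ℝ} (hr : 0 < r) (h1 : 0 < r1) (h2 : 0 < r2) :
    0 ≤ condCDF1D r r1 r2 := by
  unfold condCDF1D
  apply div_nonneg _ (by linarith)
  apply le_min (le_min (by linarith) _) (by linarith)
  rcases le_total r1 r2 with h | h
  · rw [min_eq_left h]; linarith
  · rw [min_eq_right h]; linarith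

lemma cond_le_one {r r1 r2 : ℝ} (h1 : 0 < r1) (h2 : 0 < r2) :
    condCDF1D r r1 r2 ≤ 1 := by
  unfold condCDF1D
  rw [div_le_one (by linarith)]
  exact min_le_right _ _

lemma cond_measurable (r r1 : ℝ) : Measurable (fun r2 => condCDF1D r r1 r2) := by
  unfold condCDF1D
  exact ((measurable_const.min (measurable_const.add (measurable_const.min
    measurable_id))).min (measurable_const.add measurable_id)).div
    (measurable_const.add measurable_id)

noncomputable def Ifun (b r r1 : ℝ) : ℝ :=
  (1 - Real.exp (-(b * r))) + b * Real.exp (b * r1) *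
    ((r + r1) * E1 (b * (r1 + r)) + (if r ≤ r1 then (r - r1) * E1 (b * r1) else 0))

lemma integrableOn_inner {b r r1 : ℝ} (hb : 0 < b) (hr : 0 < r) (hr1 : 0 < r1) :
    IntegrableOn (fun r2 => condCDF1D r r1 r2 * (b * Real.exp (-(b * r2)))) (Ioi (0:ℝ)) := by
  refine ((integrableOn_expmul (c := (0:ℝ)) hb).const_mul b).mono'
    ((cond_measurable r r1).mul ((Real.measurable_exp.comp
      ((measurable_const_mul b).neg)).const_mul b)).aestronglyMeasurable.restrict ?_
  filter_upwards [ae_restrict_mem measurableSet_Ioi] with x hx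
  have h2 : (0:ℝ) < x := hx
  rw [norm_mul, norm_mul, Real.norm_eq_abs, Real.norm_eq_abs, Real.norm_eq_abs,
    abs_of_nonneg (cond_nonneg hr hr1 h2), abs_of_pos hb, abs_of_pos (Real.exp_pos _)]
  have := cond_le_one (r := r) hr1 h2
  nlinarith [Real.exp_pos (-(b * x)), mul_pos hb (Real.exp_pos (-(b * x)))]

lemma J_eval {b r r1 : ℝ} (hb : 0 < b) (hr : 0 < r) (hr1 : 0 < r1) :
    ∫ r2 in Ioi (0:ℝ), condCDF1D r r1 r2 * (b * Real.exp (-(b * r2))) = Ifun b r r1 := by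
  rw [split_Ioi hr.le (integrableOn_inner hb hr hr1)]
  by_cases hcase : r ≤ r1
  · -- r ≤ r1
    have e1 : ∫ r2 in Ioc (0:ℝ) r, condCDF1D r r1 r2 * (b * Real.exp (-(b * r2)))
        = ∫ r2 in Ioc (0:ℝ) r, (b * Real.exp (-(b * r2))
            - ((r1 - r) * b) * (Real.exp (-(b * r2)) / (r1 + r2))) := by
      apply setIntegral_congr_fun measurableSet_Ioc
      intro r2 hr2
      dsimp only
      rw [cond_eq_B hr hr2.1 hcase hr2.2]
      have : (0:ℝ) < r1 + r2 := by have := hr2.1; linarith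
      field_simp
      ring
    have e2 : ∫ r2 in Ioi r, condCDF1D r r1 r2 * (b * Real.exp (-(b * r2)))
        = ∫ r2 in Ioi r, (2 * r * b) * (Real.exp (-(b * r2)) / (r1 + r2)) := by
      apply setIntegral_congr_fun measurableSet_Ioi
      intro r2 hr2
      dsimp only
      rw [cond_eq_C hr hcase hr2]
      have : (0:ℝ) < r1 + r2 := by have : r < r2 := hr2; linarith
      field_simp
    rw [e1, e2]
    rw [integral_sub (IntegrableOn.mono_set ((integrableOn_expmul hb).const_mul b)
        Ioc_subset_Ioi_self)
      (Integrable.const_mul (IntegrableOn.mono_set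
        (integrableOn_K hb (by linarith : (0:ℝ) < r1 + 0)) Ioc_subset_Ioi_self) _),
      integral_const_mul, integral_const_mul, integral_const_mul,
      exp_Ioc hb hr.le, K_Ioc hb (by linarith : (0:ℝ) < r1 + 0) hr.le,
      K_Ioi hb (by linarith : (0:ℝ) < r1 + r)]
    rw [Ifun, if_pos hcase]
    rw [add_zero, mul_zero, neg_zero, Real.exp_zero]
    field_simp
    ring
  · push_neg at hcase
    have e1 : ∫ r2 in Ioc (0:ℝ) r, condCDF1D r r1 r2 * (b * Real.exp (-(b * r2)))
        = ∫ r2 in Ioc (0:ℝ) r, b * Real.exp (-(b * r2)) := by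
      apply setIntegral_congr_fun measurableSet_Ioc
      intro r2 hr2
      dsimp only
      rw [cond_eq_one hr1 hr2.1 hcase hr2.2, one_mul]
    have e2 : ∫ r2 in Ioi r, condCDF1D r r1 r2 * (b * Real.exp (-(b * r2)))
        = ∫ r2 in Ioi r, ((r + r1) * b) * (Real.exp (-(b * r2)) / (r1 + r2)) := by
      apply setIntegral_congr_fun measurableSet_Ioi
      intro r2 hr2
      dsimp only
      rw [cond_eq_A hr1 hcase hr2]
      have : (0:ℝ) < r1 + r2 := by have : r < r2 := hr2; linarith
      field_simp
    rw [e1, e2, integral_const_mul, integral_const_mul, exp_Ioc hb hr.le,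
      K_Ioi hb (by linarith : (0:ℝ) < r1 + r)]
    rw [Ifun, if_neg (not_le.mpr hcase)]
    rw [mul_zero, neg_zero, Real.exp_zero, add_zero]
    field_simp

lemma inner_eval {b r r1 : ℝ} (hb : 0 < b) (hr : 0 < r) (hr1 : 0 < r1) :
    ∫ r2 in Ioi (0:ℝ), condCDF1D r r1 r2 * ((b * Real.exp (-(b * r1))) * (b * Real.exp (-(b * r2))))
      = (b * Real.exp (-(b * r1))) * Ifun b r r1 := by
  have : ∀ r2 : ℝ, condCDF1D r r1 r2 * ((b * Real.exp (-(b * r1))) * (b * Real.exp (-(b * r2))))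
      = (b * Real.exp (-(b * r1))) * (condCDF1D r r1 r2 * (b * Real.exp (-(b * r2)))) := by
    intro r2; ring
  simp_rw [this]
  rw [integral_const_mul, J_eval hb hr hr1]

lemma continuousOn_E1 : ContinuousOn E1 (Ioi (0:ℝ)) :=
  fun z hz => ((hasDerivAt_E1 hz).continuousAt).continuousWithinAt

lemma contOn_E1_comp {b c : ℝ} (hb : 0 < b) (hc : 0 ≤ c) (g : ℝ → ℝ) (hg : Continuous g) :
    ContinuousOn (fun u => g u * E1 (b * u)) (Ioi c) := by
  apply hg.continuousOn.mul
  apply continuousOn_E1.comp ((continuous_mul_left b).continuousOn)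
  intro u hu
  exact mem_Ioi.mpr (mul_pos hb (lt_of_le_of_lt hc hu))

lemma integrableOn_E1 {b c : ℝ} (hb : 0 < b) (hc : 0 < c) :
    IntegrableOn (fun u => E1 (b * u)) (Ioi c) := by
  have : IntegrableOn (fun u => (1:ℝ) * E1 (b * u)) (Ioi c) := by
    refine ((integrableOn_expmul (c := c) hb).const_mul (1 / (b * c))).mono'
      ((contOn_E1_comp hb hc.le _ continuous_const).aestronglyMeasurable measurableSet_Ioi) ?_
    filter_upwards [ae_restrict_mem measurableSet_Ioi] with u hu
    have hcu : c < u := hu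
    have hbu : 0 < b * u := mul_pos hb (hc.trans hcu)
    rw [one_mul, Real.norm_eq_abs, abs_of_nonneg (E1_nonneg hbu)]
    calc E1 (b * u) ≤ Real.exp (-(b * u)) / (b * u) := E1_le hbu
    _ ≤ Real.exp (-(b * u)) / (b * c) :=
        div_le_div_of_nonneg_left (Real.exp_pos _).le (mul_pos hb hc) (by nlinarith)
    _ = 1 / (b * c) * Real.exp (-(b * u)) := by ring
  simpa using this

lemma integrableOn_mul_E1 {b c : ℝ} (hb : 0 < b) (hc : 0 ≤ c) (g : ℝ → ℝ)
    (hgcont : Continuous g) (hgb : ∀ u ∈ Ioi c, |g u| ≤ u) :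
    IntegrableOn (fun u => g u * E1 (b * u)) (Ioi c) := by
  refine ((integrableOn_expmul (c := c) hb).const_mul (1 / b)).mono'
    ((contOn_E1_comp hb hc g hgcont).aestronglyMeasurable measurableSet_Ioi) ?_
  filter_upwards [ae_restrict_mem measurableSet_Ioi] with u hu
  have hcu : c < u := hu
  have hu0 : 0 < u := lt_of_le_of_lt hc hcu
  have hbu : 0 < b * u := by positivity
  rw [Real.norm_eq_abs, abs_mul, abs_of_nonneg (E1_nonneg hbu)]
  calc |g u| * E1 (b * u) ≤ u * (Real.exp (-(b * u)) / (b * u)) := by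
        apply mul_le_mul (hgb u hu) (E1_le hbu) (E1_nonneg hbu) hu0.le
  _ = 1 / b * Real.exp (-(b * u)) := by field_simp

lemma tendsto_expb {b : ℝ} (hb : 0 < b) :
    Filter.Tendsto (fun u : ℝ => Real.exp (-(b * u)) / b) Filter.atTop (nhds 0) := by
  rw [show (0:ℝ) = 0 / b by simp]
  apply Filter.Tendsto.div_const
  have hb' : Filter.Tendsto (fun u : ℝ => b * u) Filter.atTop Filter.atTop :=
    Filter.Tendsto.const_mul_atTop hb Filter.tendsto_id
  have := Real.tendsto_exp_neg_atTop_nhds_zero.comp hb'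
  exact this.congr (fun u => by simp [Function.comp])

lemma tendsto_mul_E1 {b : ℝ} (hb : 0 < b) :
    Filter.Tendsto (fun u => u * E1 (b * u)) Filter.atTop (nhds 0) := by
  have h1 : ∀ᶠ u in Filter.atTop, u * E1 (b * u) ≤ Real.exp (-(b * u)) / b := by
    filter_upwards [Filter.eventually_gt_atTop 0] with u hu
    have hbu : 0 < b * u := by positivity
    calc u * E1 (b * u) ≤ u * (Real.exp (-(b * u)) / (b * u)) := by
          apply mul_le_mul_of_nonneg_left (E1_le hbu) hu.le
    _ = Real.exp (-(b * u)) / b := by field_simp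
  have h2 : ∀ᶠ u in Filter.atTop, 0 ≤ u * E1 (b * u) := by
    filter_upwards [Filter.eventually_gt_atTop 0] with u hu
    exact mul_nonneg hu.le (E1_nonneg (by positivity))
  exact squeeze_zero' h2 h1 (tendsto_expb hb)

lemma E1_int {b r : ℝ} (hb : 0 < b) (hr : 0 < r) :
    ∫ u in Ioi r, E1 (b * u) = Real.exp (-(b * r)) / b - r * E1 (b * r) := by
  have hderiv : ∀ u ∈ Ici r, HasDerivAt (fun u => u * E1 (b * u) - Real.exp (-(b * u)) / b)
      (E1 (b * u)) u := by
    intro u hu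
    have hu0 : 0 < u := lt_of_lt_of_le hr hu
    have hbu : 0 < b * u := by positivity
    have h1 : HasDerivAt (fun u : ℝ => b * u) b u := by
      simpa using (hasDerivAt_id u).const_mul b
    have h2 : HasDerivAt (fun u => E1 (b * u)) (-(Real.exp (-(b * u)) / u)) u := by
      have := (hasDerivAt_E1 hbu).comp u h1
      refine this.congr_deriv ?_
      field_simp
    have h3 : HasDerivAt (fun u => u * E1 (b * u))
        (E1 (b * u) - Real.exp (-(b * u))) u := by
      have := (hasDerivAt_id u).mul h2
      refine this.congr_deriv ?_
      simp only [id_eq]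
      field_simp
      ring
    have h4 : HasDerivAt (fun u => Real.exp (-(b * u)) / b) (-Real.exp (-(b * u))) u := by
      have h5 : HasDerivAt (fun u : ℝ => -(b * u)) (-b) u := by exact h1.neg
      have := (Real.hasDerivAt_exp (-(b * u))).comp u h5 |>.div_const b
      refine this.congr_deriv ?_
      field_simp
    have := h3.sub h4
    refine this.congr_deriv ?_
    ring
  have htend : Filter.Tendsto (fun u => u * E1 (b * u) - Real.exp (-(b * u)) / b)
      Filter.atTop (nhds 0) := by
    rw [show (0:ℝ) = 0 - 0 by ring]
    exact Filter.Tendsto.sub (tendsto_mul_E1 hb) (tendsto_expb hb)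
  have := integral_Ioi_of_hasDerivAt_of_tendsto' hderiv (integrableOn_E1 hb hr) htend
  rw [this]
  ring

lemma sum_int {b r : ℝ} (hb : 0 < b) (hr : 0 < r) :
    (∫ r1 in Ioi (0:ℝ), (r + r1) * E1 (b * (r1 + r))) + (∫ r1 in Ioi r, (r - r1) * E1 (b * r1))
      = r * (Real.exp (-(b * r)) / b - r * E1 (b * r)) := by
  have hA : ∫ r1 in Ioi (0:ℝ), (r + r1) * E1 (b * (r1 + r)) = ∫ u in Ioi r, u * E1 (b * u) := by
    have h := comp_add_Ioi (fun u => u * E1 (b * u)) 0 r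
    rw [zero_add] at h
    rw [← h]
    apply setIntegral_congr_fun measurableSet_Ioi
    intro x hx
    dsimp only
    rw [add_comm r x]
  have hi1 : IntegrableOn (fun u => u * E1 (b * u)) (Ioi r) := by
    have := integrableOn_mul_E1 hb hr.le id continuous_id
      (fun u hu => by rw [id, abs_of_pos (hr.trans hu)])
    simpa [id] using this
  have hi2 : IntegrableOn (fun u => (r - u) * E1 (b * u)) (Ioi r) := by
    apply integrableOn_mul_E1 hb hr.le (fun u => r - u) (by continuity)
    intro u hu
    have : r < u := hu
    rw [abs_of_nonpos (by linarith)]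
    linarith
  rw [hA, ← integral_add hi1 hi2]
  have heq : EqOn (fun u => u * E1 (b * u) + (r - u) * E1 (b * u))
      (fun u => r * E1 (b * u)) (Ioi r) := by
    intro u _; dsimp only; ring
  rw [setIntegral_congr_fun measurableSet_Ioi heq, integral_const_mul, E1_int hb hr]

lemma integrableOn_shift_E1 {b r : ℝ} (hb : 0 < b) (hr : 0 < r) :
    IntegrableOn (fun r1 => (r + r1) * E1 (b * (r1 + r))) (Ioi (0:ℝ)) := by
  refine ((integrableOn_expmul (c := (0:ℝ)) hb).const_mul (1 / b)).mono' ?_ ?_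
  · apply ContinuousOn.aestronglyMeasurable _ measurableSet_Ioi
    apply (continuous_const.add continuous_id).continuousOn.mul
    apply continuousOn_E1.comp
      ((continuous_const.mul (continuous_id.add continuous_const)).continuousOn)
    intro u hu
    have : (0:ℝ) < u := hu
    exact mem_Ioi.mpr (by show 0 < b * (u + r); nlinarith)
  · filter_upwards [ae_restrict_mem measurableSet_Ioi] with u hu
    have hu0 : (0:ℝ) < u := hu
    have harg : 0 < b * (u + r) := by positivity
    rw [Real.norm_eq_abs, abs_mul, abs_of_pos (by linarith : (0:ℝ) < r + u),
      abs_of_nonneg (E1_nonneg harg)]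
    have hexp : Real.exp (-(b * (u + r))) ≤ Real.exp (-(b * u)) :=
      Real.exp_le_exp.mpr (by nlinarith)
    calc (r + u) * E1 (b * (u + r))
        ≤ (r + u) * (Real.exp (-(b * (u + r))) / (b * (u + r))) :=
          mul_le_mul_of_nonneg_left (E1_le harg) (by linarith)
    _ = Real.exp (-(b * (u + r))) / b := by field_simp; ring
    _ ≤ Real.exp (-(b * u)) / b := by gcongr
    _ = 1 / b * Real.exp (-(b * u)) := by ring

theorem stmt9 (lam : ℝ) (hlam : 0 < lam) (r : ℝ) (hr : 0 < r) :
    (∫ r1 in Set.Ioi (0:ℝ), ∫ r2 in Set.Ioi (0:ℝ),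
        condCDF1D r r1 r2 *
          ((2 * lam * Real.exp (-2 * lam * r1)) * (2 * lam * Real.exp (-2 * lam * r2))))
      = 1 - Real.exp (-2 * lam * r) + 2 * lam * r * Real.exp (-2 * lam * r)
        - 4 * lam ^ 2 * r ^ 2 * E1 (2 * lam * r) := by
  have hb : (0:ℝ) < 2 * lam := by linarith
  have hrw : ∀ x : ℝ, (-2 : ℝ) * lam * x = -(2 * lam * x) := fun x => by ring
  simp only [hrw]
  rw [setIntegral_congr_fun measurableSet_Ioi
    (fun r1 hr1 => inner_eval hb hr (mem_Ioi.mp hr1))]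
  have expand : EqOn
      (fun r1 => 2 * lam * Real.exp (-(2 * lam * r1)) * Ifun (2 * lam) r r1)
      (fun r1 => (2 * lam * (1 - Real.exp (-(2 * lam * r)))) * Real.exp (-(2 * lam * r1))
        + (2 * lam) ^ 2 * ((r + r1) * E1 (2 * lam * (r1 + r)))
        + (2 * lam) ^ 2 * ((Ici r).indicator (fun u => (r - u) * E1 (2 * lam * u)) r1))
      (Ioi 0) := by
    intro r1 _
    dsimp only
    have hc : Real.exp (-(2 * lam * r1)) * Real.exp (2 * lam * r1) = 1 := by
      rw [← Real.exp_add]; simp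
    rw [Ifun, Set.indicator_apply]
    by_cases h : r ≤ r1
    · rw [if_pos h, if_pos (mem_Ici.mpr h)]
      linear_combination ((2 * lam) ^ 2 * ((r + r1) * E1 (2 * lam * (r1 + r))
        + (r - r1) * E1 (2 * lam * r1))) * hc
    · rw [if_neg h, if_neg (fun hx => h (mem_Ici.mp hx))]
      linear_combination ((2 * lam) ^ 2 * ((r + r1) * E1 (2 * lam * (r1 + r)))) * hc
  rw [setIntegral_congr_fun measurableSet_Ioi expand]
  have int1 : IntegrableOn
      (fun r1 => (2 * lam * (1 - Real.exp (-(2 * lam * r)))) * Real.exp (-(2 * lam * r1)))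
      (Ioi (0:ℝ)) := (integrableOn_expmul hb).const_mul _
  have int2 : IntegrableOn
      (fun r1 => (2 * lam) ^ 2 * ((r + r1) * E1 (2 * lam * (r1 + r)))) (Ioi (0:ℝ)) :=
    (integrableOn_shift_E1 hb hr).const_mul _
  have hgint : IntegrableOn (fun u => (r - u) * E1 (2 * lam * u)) (Ici r) := by
    rw [integrableOn_Ici_iff_integrableOn_Ioi]
    apply integrableOn_mul_E1 hb hr.le (fun u => r - u) (by continuity)
    intro u hu
    have : r < u := hu
    rw [abs_of_nonpos (by linarith)]
    linarith
  have int3 : IntegrableOn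
      (fun r1 => (2 * lam) ^ 2 * ((Ici r).indicator (fun u => (r - u) * E1 (2 * lam * u)) r1))
      (Ioi (0:ℝ)) :=
    ((hgint.integrable_indicator measurableSet_Ici).restrict).const_mul _
  have int12 : IntegrableOn
      (fun r1 => (2 * lam * (1 - Real.exp (-(2 * lam * r)))) * Real.exp (-(2 * lam * r1))
        + (2 * lam) ^ 2 * ((r + r1) * E1 (2 * lam * (r1 + r)))) (Ioi (0:ℝ)) := int1.add int2
  rw [integral_add int12 int3, integral_add int1 int2,
    integral_const_mul, integral_const_mul, integral_const_mul, exp_Ioi hb]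
  rw [setIntegral_indicator measurableSet_Ici,
    inter_eq_self_of_subset_right (fun x hx => mem_Ioi.mpr (lt_of_lt_of_le hr (mem_Ici.mp hx))),
    integral_Ici_eq_integral_Ioi]
  have hs := sum_int hb hr
  simp only [mul_zero, neg_zero, Real.exp_zero]
  linear_combination (norm := (field_simp; ring)) (2 * lam) ^ 2 * hs
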